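/- arXiv:1903.11841 — 9 statements merged into one kernel-verified Lean document; each statement's English description precedes it below -/
import Mathlib

section
/- Let ρ(p,q,s,t,v,w) denote the symmetric 2×2 real matrix with entries ρ₁₁ = p² + q² − s² − t² − pw − tw, ρ₁₂ = ρ₂₁ = −(p+t)v + (q+s)w, and ρ₂₂ = qv − sv + (p − t − w)w. Then for (p,q,s,t,v,w) ∈ ℝ⁶ one has ρ(p,q,s,t,v,w) = 0 if and only if there exist θ ∈ ℝ and r ∈ ℝ such that v = r·cos θ, w = r·sin θ, p = r·sin³θ + s·sin 2θ − t·cos 2θ, and q = r·cos θ·sin²θ + s·cos 2θ + t·sin 2θ. -/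
/-!
Write `(v, w) = r (cos θ, sin θ)`. For `r ≠ 0` the entries `ρ₁₂` and `ρ₂₂` say exactly that
`(p + t, q + s)` is parallel to `(sin θ, cos θ)` and `(p - t - w, q - s)` to `(cos θ, -sin θ)`;
solving these two linear conditions gives the formulas for `p` and `q`, and then
`ρ₁₁ = (p + t)(p - t - w) + (q + s)(q - s)` vanishes because the two directions are orthogonal.
For `r = 0` only `ρ₁₁ = p² + q² - s² - t²` remains, which says that `(q, p)` is a rotation of
`(s, -t)`, by the angle `2θ`.
-/

open Real

lemma fin_two_symm_matrix_eq_zero_iff {α : Type*} [Zero α] (a b d : α) :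
    !![a, b; b, d] = 0 ↔ a = 0 ∧ b = 0 ∧ d = 0 := by
  simp only [← Matrix.ext_iff, Fin.forall_fin_two, Matrix.of_apply, Matrix.cons_val',
    Matrix.cons_val_fin_one, Matrix.zero_apply, Matrix.cons_val_zero, Matrix.cons_val_one]
  tauto

lemma exists_polar_angle (x y : ℝ) :
    ∃ θ, x = √(x ^ 2 + y ^ 2) * cos θ ∧ y = √(x ^ 2 + y ^ 2) * sin θ := by
  have hnorm : ‖(⟨x, y⟩ : ℂ)‖ = √(x ^ 2 + y ^ 2) := by
    rw [Complex.norm_def, Complex.normSq_mk]; ring_nf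
  refine ⟨Complex.arg ⟨x, y⟩, ?_, ?_⟩
  · simpa [hnorm] using (Complex.norm_mul_cos_arg ⟨x, y⟩).symm
  · simpa [hnorm] using (Complex.norm_mul_sin_arg ⟨x, y⟩).symm

lemma exists_rotation_of_sq_add_sq_eq {a b c d : ℝ} (h : a ^ 2 + b ^ 2 = c ^ 2 + d ^ 2) :
    ∃ φ, a = c * cos φ - d * sin φ ∧ b = c * sin φ + d * cos φ := by
  obtain ⟨α, ha, hb⟩ := exists_polar_angle a b
  obtain ⟨β, hc, hd⟩ := exists_polar_angle c d
  rw [h] at ha hb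
  refine ⟨α - β, ?_, ?_⟩ <;> rw [cos_sub, sin_sub]
  · linear_combination ha - (cos α * cos β + sin α * sin β) * hc
      + (sin α * cos β - cos α * sin β) * hd - √(c ^ 2 + d ^ 2) * cos α * sin_sq_add_cos_sq β
  · linear_combination hb - (sin α * cos β - cos α * sin β) * hc
      - (cos α * cos β + sin α * sin β) * hd - √(c ^ 2 + d ^ 2) * sin α * sin_sq_add_cos_sq β

lemma exists_double_angle_of_sq_add_sq_eq {p q s t : ℝ} (h : p ^ 2 + q ^ 2 = s ^ 2 + t ^ 2) :
    ∃ θ, p = s * sin (2 * θ) - t * cos (2 * θ) ∧ q = s * cos (2 * θ) + t * sin (2 * θ) := by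
  obtain ⟨φ, hq, hp⟩ :=
    exists_rotation_of_sq_add_sq_eq (a := q) (b := p) (c := s) (d := -t) (by linear_combination h)
  refine ⟨φ / 2, ?_, ?_⟩ <;> rw [mul_div_cancel₀ φ two_ne_zero]
  · linear_combination hp
  · linear_combination hq

lemma eq_param_of_ricci₁₂_of_ricci₂₂ {p q s t r θ : ℝ} (hr : r ≠ 0)
    (h₁₂ : -(p + t) * (r * cos θ) + (q + s) * (r * sin θ) = 0)
    (h₂₂ : q * (r * cos θ) - s * (r * cos θ) + (p - t - r * sin θ) * (r * sin θ) = 0) :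
    p = r * sin θ ^ 3 + s * sin (2 * θ) - t * cos (2 * θ) ∧
      q = r * cos θ * sin θ ^ 2 + s * cos (2 * θ) + t * sin (2 * θ) := by
  have hX : (q + s) * sin θ = (p + t) * cos θ :=
    mul_left_cancel₀ hr (by linear_combination h₁₂)
  have hY : (q - s) * cos θ = -(p - t - r * sin θ) * sin θ :=
    mul_left_cancel₀ hr (by linear_combination h₂₂)
  rw [sin_two_mul, cos_two_mul]
  constructor
  · linear_combination (-cos θ) * hX + sin θ * hY + (t - p) * sin_sq_add_cos_sq θ
  · linear_combination sin θ * hX + cos θ * hY - (q + s) * sin_sq_add_cos_sq θ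

lemma ricci_entries_eq_zero_of_param {p q s t v w θ r : ℝ}
    (hv : v = r * cos θ) (hw : w = r * sin θ)
    (hp : p = r * sin θ ^ 3 + s * sin (2 * θ) - t * cos (2 * θ))
    (hq : q = r * cos θ * sin θ ^ 2 + s * cos (2 * θ) + t * sin (2 * θ)) :
    p ^ 2 + q ^ 2 - s ^ 2 - t ^ 2 - p * w - t * w = 0 ∧ -(p + t) * v + (q + s) * w = 0 ∧
      q * v - s * v + (p - t - w) * w = 0 := by
  rw [sin_two_mul, cos_two_mul] at hp hq
  have pyth := sin_sq_add_cos_sq θ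
  set c := cos θ
  set n := sin θ
  set l := r * n ^ 2 + 2 * s * c + 2 * t * n
  set m := 2 * s * n - 2 * t * c - r * n * c
  have hX₁ : p + t = n * l := by linear_combination hp - (2 * t) * pyth
  have hX₂ : q + s = c * l := by linear_combination hq
  have hY₁ : p - t - w = c * m := by linear_combination hp - hw + r * n * pyth
  have hY₂ : q - s = -n * m := by linear_combination hq + 2 * s * pyth
  refine ⟨?_, ?_, ?_⟩
  · linear_combination (p - t - w) * hX₁ + n * l * hY₁ + (q - s) * hX₂ + c * l * hY₂
  · linear_combination -v * hX₁ + w * hX₂ + l * (c * hw - n * hv)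
  · linear_combination v * hY₂ + w * hY₁ + m * (c * hw - n * hv)

theorem stmt_0 (p q s t v w : ℝ) :
    (!![p^2 + q^2 - s^2 - t^2 - p*w - t*w, -(p+t)*v + (q+s)*w;
        -(p+t)*v + (q+s)*w, q*v - s*v + (p - t - w)*w] :
      Matrix (Fin 2) (Fin 2) ℝ) = 0 ↔
    ∃ θ r : ℝ, v = r * cos θ ∧ w = r * sin θ ∧
      p = r * sin θ ^ 3 + s * sin (2*θ) - t * cos (2*θ) ∧
      q = r * cos θ * sin θ ^ 2 + s * cos (2*θ) + t * sin (2*θ) := by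
  rw [fin_two_symm_matrix_eq_zero_iff]
  constructor
  · rintro ⟨h₁₁, h₁₂, h₂₂⟩
    obtain ⟨θ, hv, hw⟩ := exists_polar_angle v w
    generalize √(v ^ 2 + w ^ 2) = r at hv hw
    by_cases hr : r = 0
    · rw [hr, zero_mul] at hv hw
      subst hv hw
      have hsq : p ^ 2 + q ^ 2 = s ^ 2 + t ^ 2 := by linear_combination h₁₁
      obtain ⟨θ, hp, hq⟩ := exists_double_angle_of_sq_add_sq_eq hsq
      exact ⟨θ, 0, by ring, by ring, by rw [hp]; ring, by rw [hq]; ring⟩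
    · rw [hv, hw] at h₁₂ h₂₂
      exact ⟨θ, r, hv, hw, eq_param_of_ricci₁₂_of_ricci₂₂ hr h₁₂ h₂₂⟩
  · rintro ⟨θ, r, hv, hw, hp, hq⟩
    exact ricci_entries_eq_zero_of_param hv hw hp hq
end

section
/- Define Φ : ℝ × ℝ³ → ℝ⁶ by Φ(θ, r, s, t) = (p, q, s, t, v, w) where v = r·cos θ, w = r·sin θ, p = r·sin³θ + s·sin 2θ − t·cos 2θ, and q = r·cos θ·sin²θ + s·cos 2θ + t·sin 2θ. Then for (r, s, t) ≠ (0,0,0) and (r', s', t') ≠ (0,0,0) and any θ, θ' ∈ ℝ, one has Φ(θ, r, s, t) = Φ(θ', r', s', t') if and only if s = s', t = t', and there exists n ∈ ℤ with θ' = θ + nπ and r' = (−1)ⁿ r. -/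
/-
Φ records the polar vector r(cos θ, sin θ) in its last two slots, and s, t in the middle ones.
If r ≠ 0, equality of polar vectors r e^{iθ} = r' e^{iθ'} with r, r' real forces θ' ≡ θ mod π and
r' = ±r accordingly. If r = 0, then r' = 0 as well, and the first two slots say that (s, t) rotated
by 2θ equals (s, t) rotated by 2θ'; as (s, t) ≠ 0, this forces 2θ' ≡ 2θ mod 2π. Conversely,
θ ↦ θ + π, r ↦ -r changes sin³θ and r by a sign each and leaves cos θ sin²θ · r, sin 2θ, cos 2θ
invariant.
-/

open Real

/-- The parametrization of the flat Type A models. -/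
noncomputable def Φ (θ r s t : ℝ) : ℝ × ℝ × ℝ × ℝ × ℝ × ℝ :=
  (r * sin θ ^ 3 + s * sin (2*θ) - t * cos (2*θ),
   r * cos θ * sin θ ^ 2 + s * cos (2*θ) + t * sin (2*θ),
   s, t, r * cos θ, r * sin θ)

lemma neg_one_zpow_mul_self (n : ℤ) : (-1 : ℝ) ^ n * (-1) ^ n = 1 := by
  rw [← mul_zpow]; norm_num

lemma eq_zero_of_mul_cos_eq_zero_of_mul_sin_eq_zero {r θ : ℝ}
    (hc : r * cos θ = 0) (hs : r * sin θ = 0) : r = 0 := by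
  have h : r ^ 2 = (r * cos θ) ^ 2 + (r * sin θ) ^ 2 := by
    linear_combination -r ^ 2 * sin_sq_add_cos_sq θ
  rw [hc, hs] at h
  exact pow_eq_zero_iff two_ne_zero |>.1 (by simpa using h)

lemma exists_int_of_mul_cos_eq_of_mul_sin_eq {r r' θ θ' : ℝ} (hr : r ≠ 0)
    (hc : r * cos θ = r' * cos θ') (hs : r * sin θ = r' * sin θ') :
    ∃ n : ℤ, θ' = θ + n * π ∧ r' = (-1) ^ n * r := by
  have hr' : r' ≠ 0 := by
    rintro rfl
    exact hr (eq_zero_of_mul_cos_eq_zero_of_mul_sin_eq_zero (by simpa using hc) (by simpa using hs))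
  have hsin : r' * sin (θ' - θ) = 0 := by
    rw [sin_sub]
    linear_combination sin θ * hc - cos θ * hs
  obtain ⟨n, hn⟩ := sin_eq_zero_iff.1 ((mul_eq_zero.1 hsin).resolve_left hr')
  have hθ' : θ' = θ + n * π := by linarith
  refine ⟨n, hθ', ?_⟩
  rw [hθ', cos_add_int_mul_pi] at hc
  rw [hθ', sin_add_int_mul_pi] at hs
  have hsign := neg_one_zpow_mul_self n
  have hdiff : r' - (-1) ^ n * r = 0 :=
    eq_zero_of_mul_cos_eq_zero_of_mul_sin_eq_zero
      (by linear_combination -(-1) ^ n * hc - r' * cos θ * hsign)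
      (by linear_combination -(-1) ^ n * hs - r' * sin θ * hsign)
  linear_combination hdiff

lemma exists_int_of_rotate_eq {s t α β : ℝ} (hst : ¬ (s = 0 ∧ t = 0))
    (h₁ : s * sin α - t * cos α = s * sin β - t * cos β)
    (h₂ : s * cos α + t * sin α = s * cos β + t * sin β) :
    ∃ k : ℤ, α = β + k * (2 * π) := by
  have hnorm : s * s + t * t ≠ 0 := mt mul_self_add_mul_self_eq_zero.1 hst
  have hcos : (s * s + t * t) * (cos (α - β) - 1) = 0 := by
    rw [cos_sub]
    linear_combination (s * cos β + t * sin β) * h₂ + (s * sin β - t * cos β) * h₁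
      + (s * s + t * t) * sin_sq_add_cos_sq β
  obtain ⟨k, hk⟩ := (cos_eq_one_iff _).1 (sub_eq_zero.1 ((mul_eq_zero.1 hcos).resolve_left hnorm))
  exact ⟨k, by linarith⟩

lemma Φ_add_int_mul_pi (θ r s t : ℝ) (n : ℤ) :
    Φ (θ + n * π) ((-1) ^ n * r) s t = Φ θ r s t := by
  have h2θ : 2 * (θ + n * π) = 2 * θ + n * (2 * π) := by ring
  have hsign := neg_one_zpow_mul_self n
  simp only [Φ, h2θ, sin_add_int_mul_two_pi, cos_add_int_mul_two_pi, sin_add_int_mul_pi,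
    cos_add_int_mul_pi, Prod.mk.injEq, true_and]
  refine ⟨?_, ?_, ?_, ?_⟩
  · linear_combination r * sin θ ^ 3 * ((-1) ^ n * (-1) ^ n + 1) * hsign
  · linear_combination r * cos θ * sin θ ^ 2 * ((-1) ^ n * (-1) ^ n + 1) * hsign
  · linear_combination r * cos θ * hsign
  · linear_combination r * sin θ * hsign

theorem stmt_1_general (θ θ' r s t r' s' t' : ℝ)
    (h : ¬ (r = 0 ∧ s = 0 ∧ t = 0)) :
    Φ θ r s t = Φ θ' r' s' t' ↔
      s = s' ∧ t = t' ∧ ∃ n : ℤ, θ' = θ + n * π ∧ r' = (-1 : ℝ)^n * r := by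
  constructor
  · intro heq
    simp only [Φ, Prod.mk.injEq] at heq
    obtain ⟨hp, hq, rfl, rfl, hv, hw⟩ := heq
    refine ⟨rfl, rfl, ?_⟩
    by_cases hr : r = 0
    · subst hr
      obtain rfl : r' = 0 :=
        eq_zero_of_mul_cos_eq_zero_of_mul_sin_eq_zero (by simpa using hv.symm) (by simpa using hw.symm)
      obtain ⟨k, hk⟩ := exists_int_of_rotate_eq (α := 2 * θ') (β := 2 * θ) (fun hst => h ⟨rfl, hst⟩)
        (by linear_combination hp.symm) (by linear_combination hq.symm)
      exact ⟨k, by linarith, by simp⟩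
    · exact exists_int_of_mul_cos_eq_of_mul_sin_eq hr hv hw
  · rintro ⟨rfl, rfl, n, rfl, rfl⟩
    exact (Φ_add_int_mul_pi θ r s t n).symm

theorem stmt_1 (θ θ' r s t r' s' t' : ℝ)
    (h : ¬ (r = 0 ∧ s = 0 ∧ t = 0)) (h' : ¬ (r' = 0 ∧ s' = 0 ∧ t' = 0)) :
    Φ θ r s t = Φ θ' r' s' t' ↔
      s = s' ∧ t = t' ∧ ∃ n : ℤ, θ' = θ + n * π ∧ r' = (-1 : ℝ)^n * r :=
  stmt_1_general θ θ' r s t r' s' t' h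
end

section
/- Let 𝒜¹₊ = { x ∈ ℝ⁶ : Ric(x) has rank 1 and Ric(x) is positive semidefinite }, equipped with the subspace topology from ℝ⁶, where Ric(a,b,c,d,e,f) is the symmetric 2×2 matrix with entries Ric₁₁ = (a−d)d + b(f−c), Ric₁₂ = Ric₂₁ = cd − be, Ric₂₂ = c(f−c) + (a−d)e. Then 𝒜¹₊ is homeomorphic to S¹ × S¹ × ℝ³, where S¹ is the unit circle. -/
open Matrix

/-- The space of Type A models: `(a,b,c,d,e,f)` records the Christoffel symbols. -/
abbrev R6 : Type := ℝ × ℝ × ℝ × ℝ × ℝ × ℝ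

/-- The Ricci tensor of the Type A model with Christoffel symbols `(a,b,c,d,e,f)`. -/
def Ric : R6 → Matrix (Fin 2) (Fin 2) ℝ
  | (a, b, c, d, e, f) =>
    !![(a-d)*d + b*(f-c), c*d - b*e; c*d - b*e, c*(f-c) + (a-d)*e]

/-- A real matrix is positive semidefinite if it is symmetric and all the
associated quadratic form values are nonnegative. -/
def PosSemidef' (M : Matrix (Fin 2) (Fin 2) ℝ) : Prop :=
  Mᵀ = M ∧ ∀ x : Fin 2 → ℝ, 0 ≤ dotProduct x (M.mulVec x)

/-- Type A models whose Ricci tensor has rank one and is positive semidefinite,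
with the subspace topology from ℝ⁶. -/
def A1pos : Set R6 := {x | (Ric x).rank = 1 ∧ PosSemidef' (Ric x)}

/-- The unit circle in the plane. -/
def unitCircle : Set (ℝ × ℝ) := {p | p.1^2 + p.2^2 = 1}


/-!
If `Ric z` has rank one and is positive semidefinite, then
`Ric z = (τ / 2) • !![1 + x, y; y, 1 - x]` with `τ = tr (Ric z) > 0` and `(x, y)` on the unit
circle. Conversely, for `ω = (x, y)` on the unit circle, `model ω` is a linear map
`ℝ² × ℝ² → ℝ⁶` with `Ric (model ω (G, H)) = (G ⬝ H / 2) • !![1 + x, y; y, 1 - x]`, and every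
`z ∈ A1pos` is `model ω (G, H)` for `ω` its Ricci direction and `(G, H)` read off linearly
from `z`. Hence `A1pos ≃ₜ S¹ × {G ⬝ H > 0}`. Writing `G = W + V`, `H = W - V` turns `G ⬝ H` into
`|W|² - |V|²`, so `(G, H) ↦ (W / |W|, log (G ⬝ H), V)` identifies `{G ⬝ H > 0}` with `S¹ × ℝ³`.
-/

theorem Matrix.rank_eq_zero_iff {K m n : Type*} [Field K] [Fintype n] [DecidableEq n]
    (M : Matrix m n K) : M.rank = 0 ↔ M = 0 := by
  rw [Matrix.rank, Submodule.finrank_eq_zero, LinearMap.range_eq_bot]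
  constructor
  · intro h
    ext i j
    simpa using congrFun (LinearMap.congr_fun h (Pi.single j 1)) i
  · rintro rfl
    ext
    simp

theorem Matrix.rank_lt_card_of_det_eq_zero {K n : Type*} [Field K] [Fintype n] [DecidableEq n]
    (M : Matrix n n K) (h : M.det = 0) : M.rank < Fintype.card n := by
  obtain ⟨v, hv, hMv⟩ := M.exists_mulVec_eq_zero_iff.2 h
  have hker : 0 < Module.finrank K (LinearMap.ker M.mulVecLin) :=
    Module.finrank_pos_iff_exists_ne_zero.2 ⟨⟨v, hMv⟩, fun h => hv (congrArg Subtype.val h)⟩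
  have := LinearMap.finrank_range_add_finrank_ker M.mulVecLin
  rw [Module.finrank_fintype_fun_eq_card] at this
  rw [Matrix.rank]
  omega

theorem Matrix.rank_fin_two_eq_one_iff {K : Type*} [Field K] (M : Matrix (Fin 2) (Fin 2) K) :
    M.rank = 1 ↔ M ≠ 0 ∧ M.det = 0 := by
  constructor
  · intro h
    refine ⟨fun h0 => by simp [h0] at h, ?_⟩
    by_contra hdet
    simpa [h] using M.rank_of_det_ne_zero hdet
  · rintro ⟨hM, hdet⟩
    have hlt := M.rank_lt_card_of_det_eq_zero hdet
    have hne := (not_congr M.rank_eq_zero_iff).2 hM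
    rw [Fintype.card_fin] at hlt
    omega

theorem rank_eq_one_and_posSemidef'_iff (M : Matrix (Fin 2) (Fin 2) ℝ) :
    M.rank = 1 ∧ PosSemidef' M ↔ Mᵀ = M ∧ M.det = 0 ∧ 0 < M.trace := by
  have quad (v : Fin 2 → ℝ) :
      v ⬝ᵥ M *ᵥ v = M 0 0 * v 0 ^ 2 + (M 0 1 + M 1 0) * v 0 * v 1 + M 1 1 * v 1 ^ 2 := by
    simp only [dotProduct, mulVec, Fin.sum_univ_two]
    ring
  rw [M.rank_fin_two_eq_one_iff, det_fin_two, trace_fin_two]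
  constructor
  · rintro ⟨⟨hM, hdet⟩, hsymm, hpos⟩
    have h10 : M 1 0 = M 0 1 := congrFun₂ hsymm 0 1
    have h00 : 0 ≤ M 0 0 := by simpa [quad] using hpos (Pi.single 0 1)
    have h11 : 0 ≤ M 1 1 := by simpa [quad] using hpos (Pi.single 1 1)
    refine ⟨hsymm, hdet, lt_of_le_of_ne (add_nonneg h00 h11) fun htr => hM ?_⟩
    have h00' : M 0 0 = 0 := by linarith
    have h11' : M 1 1 = 0 := by linarith
    have h01 : M 0 1 = 0 := by nlinarith
    ext i j
    fin_cases i <;> fin_cases j <;> simp [h00', h11', h01, h10]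
  · rintro ⟨hsymm, hdet, htr⟩
    have h10 : M 1 0 = M 0 1 := congrFun₂ hsymm 0 1
    refine ⟨⟨fun h0 => by simp [h0] at htr, hdet⟩, hsymm, fun v => ?_⟩
    have key : (M 0 0 + M 1 1) * (v ⬝ᵥ M *ᵥ v)
        = (M 0 0 * v 0 + M 0 1 * v 1) ^ 2 + (M 0 1 * v 0 + M 1 1 * v 1) ^ 2 := by
      rw [quad, h10]
      rw [h10] at hdet
      linear_combination (v 1 ^ 2 + v 0 ^ 2) * hdet
    exact (mul_nonneg_iff_of_pos_left htr).1 (key ▸ by positivity)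

namespace A1pos

noncomputable section

def sqNorm (v : ℝ × ℝ) : ℝ := v.1 ^ 2 + v.2 ^ 2

def normalize (v : ℝ × ℝ) : ℝ × ℝ := (√(sqNorm v))⁻¹ • v

def pairing (p : (ℝ × ℝ) × (ℝ × ℝ)) : ℝ := p.1.1 * p.2.1 + p.1.2 * p.2.2

def posCone : Set ((ℝ × ℝ) × (ℝ × ℝ)) := {p | 0 < pairing p}

@[fun_prop]
lemma continuous_sqNorm : Continuous sqNorm := by
  unfold sqNorm
  fun_prop

@[fun_prop]
lemma continuous_pairing : Continuous pairing := by
  unfold pairing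
  fun_prop

lemma sqNorm_nonneg (v : ℝ × ℝ) : 0 ≤ sqNorm v := by
  unfold sqNorm
  positivity

lemma sqNorm_pos {v : ℝ × ℝ} (hv : v ≠ 0) : 0 < sqNorm v := by
  obtain ⟨x, y⟩ := v
  have : x ≠ 0 ∨ y ≠ 0 := by
    by_contra! h
    exact hv (by rw [h.1, h.2]; rfl)
  unfold sqNorm
  rcases this with h | h <;> positivity

lemma sqNorm_smul (c : ℝ) (v : ℝ × ℝ) : sqNorm (c • v) = c ^ 2 * sqNorm v := by
  simp only [sqNorm, Prod.smul_fst, Prod.smul_snd, smul_eq_mul]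
  ring

@[fun_prop]
lemma Continuous.normalize {X : Type*} [TopologicalSpace X] {f : X → ℝ × ℝ} (hf : Continuous f)
    (h0 : ∀ x, f x ≠ 0) : Continuous fun x => normalize (f x) := by
  unfold A1pos.normalize
  fun_prop (disch := exact fun x => (Real.sqrt_pos.2 (sqNorm_pos (h0 x))).ne')

lemma sqrt_sqNorm_smul_normalize (v : ℝ × ℝ) : √(sqNorm v) • normalize v = v := by
  rcases eq_or_ne v 0 with rfl | hv
  · simp [normalize]
  · exact smul_inv_smul₀ (Real.sqrt_pos.2 (sqNorm_pos hv)).ne' v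

lemma normalize_mem_unitCircle {v : ℝ × ℝ} (hv : v ≠ 0) : normalize v ∈ unitCircle := by
  show sqNorm (normalize v) = 1
  rw [normalize, sqNorm_smul, inv_pow, Real.sq_sqrt (sqNorm_pos hv).le,
    inv_mul_cancel₀ (sqNorm_pos hv).ne']

lemma normalize_smul {η : ℝ × ℝ} (hη : η ∈ unitCircle) {c : ℝ} (hc : 0 < c) :
    normalize (c • η) = η := by
  have hη' : sqNorm η = 1 := hη
  rw [normalize, sqNorm_smul, hη', mul_one, Real.sqrt_sq hc.le, inv_smul_smul₀ hc.ne']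

lemma pairing_add_sub (W V : ℝ × ℝ) : pairing (W + V, W - V) = sqNorm W - sqNorm V := by
  simp only [pairing, sqNorm, Prod.fst_add, Prod.snd_add, Prod.fst_sub, Prod.snd_sub]
  ring

lemma pairing_eq_sqNorm_sub_sqNorm (p : (ℝ × ℝ) × (ℝ × ℝ)) :
    pairing p = sqNorm ((2 : ℝ)⁻¹ • (p.1 + p.2)) - sqNorm ((2 : ℝ)⁻¹ • (p.1 - p.2)) := by
  simp only [pairing, sqNorm, Prod.smul_fst, Prod.smul_snd, Prod.fst_add, Prod.snd_add,
    Prod.fst_sub, Prod.snd_sub, smul_eq_mul]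
  ring

lemma half_add_ne_zero {p : (ℝ × ℝ) × (ℝ × ℝ)} (hp : p ∈ posCone) :
    (2 : ℝ)⁻¹ • (p.1 + p.2) ≠ 0 := by
  intro h
  have hp' : 0 < pairing p := hp
  have h0 : sqNorm (0 : ℝ × ℝ) = 0 := by simp [sqNorm]
  rw [pairing_eq_sqNorm_sub_sqNorm, h, h0] at hp'
  linarith [sqNorm_nonneg ((2 : ℝ)⁻¹ • (p.1 - p.2))]

lemma pairing_sqrt_smul_add_sub {η : ℝ × ℝ} (hη : η ∈ unitCircle) (s : ℝ) (v : ℝ × ℝ) :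
    pairing (√(Real.exp s + sqNorm v) • η + v, √(Real.exp s + sqNorm v) • η - v) =
      Real.exp s := by
  have hη' : sqNorm η = 1 := hη
  rw [pairing_add_sub, sqNorm_smul, hη',
    Real.sq_sqrt (add_nonneg (Real.exp_pos s).le (sqNorm_nonneg v))]
  ring

def posConeHomeomorphUnitCircleProd : posCone ≃ₜ unitCircle × ℝ × ℝ × ℝ where
  toFun p :=
    (⟨normalize ((2 : ℝ)⁻¹ • (p.1.1 + p.1.2)), normalize_mem_unitCircle (half_add_ne_zero p.2)⟩,
      Real.log (pairing p), (2 : ℝ)⁻¹ • (p.1.1 - p.1.2))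
  invFun q :=
    ⟨(√(Real.exp q.2.1 + sqNorm q.2.2) • q.1.1 + q.2.2,
        √(Real.exp q.2.1 + sqNorm q.2.2) • q.1.1 - q.2.2),
      show 0 < pairing _ by
        rw [pairing_sqrt_smul_add_sub q.1.2]
        exact Real.exp_pos _⟩
  left_inv := fun ⟨p, hp⟩ => by
    ext1
    dsimp only
    rw [Real.exp_log hp, pairing_eq_sqNorm_sub_sqNorm p, sub_add_cancel,
      sqrt_sqNorm_smul_normalize]
    ext <;> simp <;> ring
  right_inv := fun ⟨⟨η, hη⟩, s, v⟩ => by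
    have hm : 0 < √(Real.exp s + sqNorm v) :=
      Real.sqrt_pos.2 (add_pos_of_pos_of_nonneg (Real.exp_pos s) (sqNorm_nonneg v))
    refine Prod.ext (Subtype.ext ?_) (Prod.ext ?_ ?_) <;> dsimp only
    · convert normalize_smul hη hm using 2
      module
    · rw [pairing_sqrt_smul_add_sub hη, Real.log_exp]
    · module
  continuous_toFun := by
    fun_prop (disch := first
      | exact fun p => half_add_ne_zero p.2
      | exact fun p => ne_of_gt p.2)
  continuous_invFun := by fun_prop

lemma Ric_transpose (z : R6) : (Ric z)ᵀ = Ric z := by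
  ext i j
  fin_cases i <;> fin_cases j <;> rfl

lemma mem_iff {z : R6} : z ∈ A1pos ↔ (Ric z).det = 0 ∧ 0 < (Ric z).trace := by
  rw [A1pos, Set.mem_ofPred_eq, rank_eq_one_and_posSemidef'_iff,
    and_iff_right (Ric_transpose z)]

lemma continuous_Ric : Continuous Ric := by
  unfold Ric
  fun_prop

def ricciDir (z : R6) : ℝ × ℝ :=
  ((Ric z 0 0 - Ric z 1 1) / (Ric z).trace, 2 * Ric z 0 1 / (Ric z).trace)

lemma ricciDir_mem_unitCircle {z : R6} (hz : z ∈ A1pos) : ricciDir z ∈ unitCircle := by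
  rw [mem_iff, det_fin_two, trace_fin_two] at hz
  obtain ⟨hdet, htr⟩ := hz
  have h10 : Ric z 1 0 = Ric z 0 1 := rfl
  rw [h10] at hdet
  rw [unitCircle, Set.mem_ofPred_eq, ricciDir, trace_fin_two]
  field_simp
  linear_combination (-4) * hdet

lemma continuous_ricciDir : Continuous fun z : A1pos => ricciDir z := by
  have hRic : Continuous fun z : A1pos => Ric z := continuous_Ric.comp continuous_subtype_val
  have htr : ∀ z : A1pos, (Ric z).trace ≠ 0 := fun z => (mem_iff.1 z.2).2.ne'
  unfold ricciDir
  fun_prop (disch := exact htr)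

/- In the coordinates `(a - d, b + c, c - b, d + e, f - c, d - e)` of `ℝ⁶`, `model ω (G, H)` is
`(G ⬝ ω, G × ω, G.2, H ⬝ ω, H × ω, H.1)`, where `v × (x, y) = v.1 * y - v.2 * x`. -/
def model : ℝ × ℝ → (ℝ × ℝ) × (ℝ × ℝ) → R6
  | (x, y), ((g₁, g₂), (h₁, h₂)) =>
    (g₁ * x + g₂ * y + (h₁ * x + h₂ * y + h₁) / 2, (g₁ * y - g₂ * x - g₂) / 2,
      (g₁ * y - g₂ * x + g₂) / 2, (h₁ * x + h₂ * y + h₁) / 2, (h₁ * x + h₂ * y - h₁) / 2,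
      (g₁ * y - g₂ * x + g₂) / 2 + h₁ * y - h₂ * x)

def modelCoords : ℝ × ℝ → R6 → (ℝ × ℝ) × (ℝ × ℝ)
  | (x, y), (a, b, c, d, e, f) =>
    (((a - d) * x + (b + c) * y, c - b), (d - e, (d + e) * y - (f - c) * x))

lemma continuous_model : Continuous fun q : (ℝ × ℝ) × (ℝ × ℝ) × (ℝ × ℝ) => model q.1 q.2 := by
  unfold model
  fun_prop

lemma continuous_modelCoords : Continuous fun q : (ℝ × ℝ) × R6 => modelCoords q.1 q.2 := by
  unfold modelCoords
  fun_prop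

lemma Ric_model {ω : ℝ × ℝ} (hω : ω ∈ unitCircle) (p : (ℝ × ℝ) × (ℝ × ℝ)) :
    Ric (model ω p) = (pairing p / 2) • !![1 + ω.1, ω.2; ω.2, 1 - ω.1] := by
  obtain ⟨x, y⟩ := ω
  obtain ⟨⟨g₁, g₂⟩, ⟨h₁, h₂⟩⟩ := p
  simp only [unitCircle, Set.mem_ofPred_eq] at hω
  ext i j
  fin_cases i <;> fin_cases j <;>
    simp only [Ric, model, pairing, add_sub_cancel_right, Fin.zero_eta, Fin.isValue, Fin.mk_one,
      of_apply, cons_val', cons_val_zero, cons_val_one, cons_val_fin_one, Matrix.smul_apply,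
      smul_eq_mul]
  · linear_combination ((g₁ * h₁ + g₂ * h₂) / 2) * hω
  · ring
  · ring
  · linear_combination ((g₁ * h₁ + g₂ * h₂) / 2) * hω

lemma trace_Ric_model {ω : ℝ × ℝ} (hω : ω ∈ unitCircle) (p : (ℝ × ℝ) × (ℝ × ℝ)) :
    (Ric (model ω p)).trace = pairing p := by
  rw [Ric_model hω, trace_smul, trace_fin_two_of, smul_eq_mul]
  ring

lemma model_mem {ω : ℝ × ℝ} (hω : ω ∈ unitCircle) {p : (ℝ × ℝ) × (ℝ × ℝ)} (hp : p ∈ posCone) :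
    model ω p ∈ A1pos := by
  refine mem_iff.2 ⟨?_, (trace_Ric_model hω p).symm ▸ hp⟩
  rw [Ric_model hω, det_smul, det_fin_two_of]
  simp only [unitCircle, Set.mem_ofPred_eq] at hω
  linear_combination (-(pairing p / 2) ^ Fintype.card (Fin 2)) * hω

lemma ricciDir_model {ω : ℝ × ℝ} (hω : ω ∈ unitCircle) {p : (ℝ × ℝ) × (ℝ × ℝ)}
    (hp : p ∈ posCone) : ricciDir (model ω p) = ω := by
  have hκ : pairing p ≠ 0 := ne_of_gt hp
  rw [ricciDir, trace_Ric_model hω, Ric_model hω]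
  ext <;>
    simp only [Fin.isValue, Matrix.smul_apply, of_apply, cons_val', cons_val_zero, cons_val_one,
      cons_val_fin_one, smul_eq_mul] <;>
    rw [div_eq_iff hκ] <;> ring

lemma modelCoords_model {ω : ℝ × ℝ} (hω : ω ∈ unitCircle) (p : (ℝ × ℝ) × (ℝ × ℝ)) :
    modelCoords ω (model ω p) = p := by
  obtain ⟨x, y⟩ := ω
  obtain ⟨⟨g₁, g₂⟩, ⟨h₁, h₂⟩⟩ := p
  simp only [unitCircle, Set.mem_ofPred_eq] at hω
  simp only [model, modelCoords, Prod.mk.injEq]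
  refine ⟨⟨?_, ?_⟩, ?_, ?_⟩
  · linear_combination g₁ * hω
  · ring
  · ring
  · linear_combination h₂ * hω

lemma model_ricciDir_modelCoords {z : R6} (hz : z ∈ A1pos) :
    model (ricciDir z) (modelCoords (ricciDir z) z) = z := by
  have hω := ricciDir_mem_unitCircle hz
  have hτ := (mem_iff.1 hz).2.ne'
  obtain ⟨a, b, c, d, e, f⟩ := z
  rcases hdir : ricciDir (a, b, c, d, e, f) with ⟨x, y⟩
  rw [hdir] at hω
  simp only [unitCircle, Set.mem_ofPred_eq] at hω
  simp only [ricciDir, Prod.mk.injEq] at hdir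
  rw [div_eq_iff hτ, div_eq_iff hτ] at hdir
  obtain ⟨hx, hy⟩ := hdir
  simp only [Ric, trace_fin_two_of, of_apply, cons_val', cons_val_zero, cons_val_one,
    empty_val', cons_val_fin_one] at hx hy hτ
  -- multiplied by the trace, both relations are polynomial identities in `a, …, f`
  have h₁ : (b + c) * x + (c - b) = (a - d) * y :=
    mul_left_cancel₀ hτ (by linear_combination (a - d) * hy - (b + c) * hx)
  have h₂ : (d + e) * x + (f - c) * y = d - e :=
    mul_left_cancel₀ hτ (by linear_combination -(d + e) * hx - (f - c) * hy)
  simp only [model, modelCoords, Prod.mk.injEq]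
  refine ⟨?_, ?_, ?_, ?_, ?_, ?_⟩
  · linear_combination y * h₁ + (a - d) * hω + (-x * h₂ + (d + e) * hω) / 2
  · linear_combination (-x * h₁ + (b + c) * hω) / 2
  · linear_combination (-x * h₁ + (b + c) * hω) / 2
  · linear_combination (-x * h₂ + (d + e) * hω) / 2
  · linear_combination (-x * h₂ + (d + e) * hω) / 2
  · linear_combination (-x * h₁ + (b + c) * hω) / 2 - y * h₂ + (f - c) * hω

lemma modelCoords_mem {z : R6} (hz : z ∈ A1pos) : modelCoords (ricciDir z) z ∈ posCone := by
  have htr := (mem_iff.1 hz).2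
  rwa [← model_ricciDir_modelCoords hz, trace_Ric_model (ricciDir_mem_unitCircle hz)] at htr

def homeomorphUnitCircleProdPosCone : A1pos ≃ₜ unitCircle × posCone where
  toFun z :=
    (⟨ricciDir z, ricciDir_mem_unitCircle z.2⟩, ⟨modelCoords (ricciDir z) z, modelCoords_mem z.2⟩)
  invFun q := ⟨model q.1 q.2, model_mem q.1.2 q.2.2⟩
  left_inv z := Subtype.ext (model_ricciDir_modelCoords z.2)
  right_inv := fun ⟨⟨ω, hω⟩, ⟨p, hp⟩⟩ => by
    ext1 <;> ext1 <;> simp only [ricciDir_model hω hp, modelCoords_model hω]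
  continuous_toFun := by
    have := continuous_ricciDir
    have := continuous_modelCoords
    fun_prop
  continuous_invFun := by
    have := continuous_model
    fun_prop

end

end A1pos

theorem stmt_5 : Nonempty (A1pos ≃ₜ unitCircle × unitCircle × (ℝ × ℝ × ℝ)) :=
  ⟨A1pos.homeomorphUnitCircleProdPosCone.trans
    ((Homeomorph.refl _).prodCongr A1pos.posConeHomeomorphUnitCircleProd)⟩
end

section
/- Let Γ be the Christoffel symbols of the model ℳ₁¹ = ℳ(−1,0,1,0,0,2), i.e., Γ₁₁¹ = −1, Γ₁₂¹ = Γ₂₁¹ = 1, Γ₂₂² = 2, and all other symbols zero. If T ∈ GL(2,ℝ) satisfies (T·Γ)ᵢⱼᵏ = Γᵢⱼᵏ for all i,j,k, then T is the identity matrix. That is, the isotropy group of ℳ₁¹ is trivial. -/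
open Matrix

/-- The Christoffel symbols of the Type A model `ℳ(a,b,c,d,e,f)`:
`christoffel a b c d e f i j k` is `Γ_{ij}{}^k` (indices `0,1` for `1,2`). -/
def christoffel (a b c d e f : ℝ) : Fin 2 → Fin 2 → Fin 2 → ℝ :=
  ![![![a, b], ![c, d]], ![![c, d], ![e, f]]]

/-- The action of `T ∈ GL(2,ℝ)` on constant Christoffel symbols:
`(T·Γ)ᵢⱼᵏ = Σ_{l,m,n} Tᵏ_l Γ_{mn}{}^l (T⁻¹)^m_i (T⁻¹)^n_j`. -/
noncomputable def glAct (T : GL (Fin 2) ℝ) (Γ : Fin 2 → Fin 2 → Fin 2 → ℝ) :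
    Fin 2 → Fin 2 → Fin 2 → ℝ := fun i j k =>
  ∑ l : Fin 2, ∑ m : Fin 2, ∑ n : Fin 2,
    (T : Matrix (Fin 2) (Fin 2) ℝ) k l * Γ m n l *
    ((T⁻¹ : GL (Fin 2) ℝ) : Matrix (Fin 2) (Fin 2) ℝ) m i *
    ((T⁻¹ : GL (Fin 2) ℝ) : Matrix (Fin 2) (Fin 2) ℝ) n j
/-! The Christoffel symbols make `ℝ²` a commutative algebra, `Γ(x, y)ᵏ = Σ Γᵢⱼᵏ xⁱ yʲ`, and the
transformation law says exactly that the isotropy group is its automorphism group. For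
`ℳ(-1,0,1,0,0,2)` the product is `(-x₀y₀ + x₀y₁ + x₁y₀, 2x₁y₁)`, whose only nonzero idempotents
are `f = (-1, 0)` and `g = (0, 1/2)`. An automorphism permutes them, and cannot swap them because
`f g = f / 2` is not symmetric in `f, g`; so it fixes the basis `f, g`, i.e. it is the identity. -/

local notation "Γ₀" => christoffel (-1) 0 1 0 0 2

def christoffelMul (Γ : Fin 2 → Fin 2 → Fin 2 → ℝ) (x y : Fin 2 → ℝ) : Fin 2 → ℝ :=
  fun k => ∑ i, ∑ j, Γ i j k * x i * y j

theorem christoffelMul_glAct_mulVec (T : GL (Fin 2) ℝ) (Γ : Fin 2 → Fin 2 → Fin 2 → ℝ)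
    (x y : Fin 2 → ℝ) :
    christoffelMul (glAct T Γ) (T.val *ᵥ x) (T.val *ᵥ y) = T.val *ᵥ christoffelMul Γ x y := by
  have hS (v : Fin 2 → ℝ) (m : Fin 2) : ∑ i, (T⁻¹).val m i * (T.val *ᵥ v) i = v m := by
    change ((T⁻¹).val *ᵥ (T.val *ᵥ v)) m = v m
    rw [mulVec_mulVec, T.inv_mul, one_mulVec]
  ext k
  calc christoffelMul (glAct T Γ) (T.val *ᵥ x) (T.val *ᵥ y) k
      = ∑ l, T.val k l * ∑ m, ∑ n, Γ m n l * (∑ i, (T⁻¹).val m i * (T.val *ᵥ x) i) *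
          (∑ j, (T⁻¹).val n j * (T.val *ᵥ y) j) := by
        simp only [christoffelMul, glAct, Fin.sum_univ_two]
        ring
    _ = (T.val *ᵥ christoffelMul Γ x y) k := by
        simp only [hS]
        rfl

theorem mulVec_christoffelMul_of_glAct_eq {T : GL (Fin 2) ℝ} {Γ : Fin 2 → Fin 2 → Fin 2 → ℝ}
    (h : glAct T Γ = Γ) (x y : Fin 2 → ℝ) :
    T.val *ᵥ christoffelMul Γ x y = christoffelMul Γ (T.val *ᵥ x) (T.val *ᵥ y) := by
  rw [← christoffelMul_glAct_mulVec, h]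

theorem christoffelMul_model (x y : Fin 2 → ℝ) :
    christoffelMul Γ₀ x y = ![-(x 0 * y 0) + x 0 * y 1 + x 1 * y 0, 2 * (x 1 * y 1)] := by
  ext k
  fin_cases k <;> simp [christoffelMul, christoffel, Fin.sum_univ_two]
  ring

theorem eq_of_christoffelMul_model_self {x : Fin 2 → ℝ} (hx : christoffelMul Γ₀ x x = x)
    (hx_ne : x ≠ 0) : x = ![-1, 0] ∨ x = ![0, 1 / 2] := by
  have e0 := congrFun hx 0
  have e1 := congrFun hx 1
  simp only [christoffelMul_model, cons_val_zero, cons_val_one] at e0 e1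
  have hx1 : x 1 = 0 ∨ x 1 = 1 / 2 := by
    rcases mul_eq_zero.1 (by linear_combination e1 : x 1 * (2 * x 1 - 1) = 0) with h | h
    exacts [.inl h, .inr (by linarith)]
  have hx0 : x 0 = 0 ∨ x 0 = 2 * x 1 - 1 := by
    rcases mul_eq_zero.1 (by linear_combination e0 : x 0 * (2 * x 1 - 1 - x 0) = 0) with h | h
    exacts [.inl h, .inr (by linarith)]
  rcases hx1 with h1 | h1 <;> rcases hx0 with h0 | h0
  · exact absurd (by ext i; fin_cases i <;> simp [h0, h1]) hx_ne
  · left; ext i; fin_cases i <;> norm_num [h0, h1]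
  · right; ext i; fin_cases i <;> norm_num [h0, h1]
  · right; ext i; fin_cases i <;> norm_num [h0, h1]

theorem mulVec_model_idempotents_of_glAct_eq {T : GL (Fin 2) ℝ} (h : glAct T Γ₀ = Γ₀) :
    T.val *ᵥ ![-1, 0] = ![-1, 0] ∧ T.val *ᵥ ![0, 1 / 2] = ![0, 1 / 2] := by
  have hinj : Function.Injective (T.val *ᵥ ·) := mulVec_injective_of_isUnit T.isUnit
  have himage (x : Fin 2 → ℝ) (hx : christoffelMul Γ₀ x x = x) (hx0 : x ≠ 0) :
      T.val *ᵥ x = ![-1, 0] ∨ T.val *ᵥ x = ![0, 1 / 2] :=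
    eq_of_christoffelMul_model_self (by rw [← mulVec_christoffelMul_of_glAct_eq h, hx])
      (fun hTx => hx0 (hinj (by simp [hTx])))
  have hf := himage ![-1, 0] (by rw [christoffelMul_model]; norm_num) (by simp)
  have hg := himage ![0, 1 / 2] (by rw [christoffelMul_model]; norm_num) (by simp)
  have hfg : christoffelMul Γ₀ ![-1, 0] ![0, 1 / 2] = (1 / 2 : ℝ) • ![-1, 0] := by
    rw [christoffelMul_model]; ext i; fin_cases i <;> norm_num
  have hne : (![-1, 0] : Fin 2 → ℝ) ≠ ![0, 1 / 2] := by simp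
  rcases hf with hf | hf <;> rcases hg with hg | hg
  · exact absurd (hinj (hf.trans hg.symm)) hne
  · exact ⟨hf, hg⟩
  · have hswap := mulVec_christoffelMul_of_glAct_eq h ![-1, 0] ![0, 1 / 2]
    rw [hfg, mulVec_smul, hf, hg, christoffelMul_model] at hswap
    simpa using congrFun hswap 0
  · exact absurd (hinj (hf.trans hg.symm)) hne

theorem eq_one_of_mulVec_model_idempotents {T : Matrix (Fin 2) (Fin 2) ℝ}
    (hf : T *ᵥ ![-1, 0] = ![-1, 0]) (hg : T *ᵥ ![0, 1 / 2] = ![0, 1 / 2]) : T = 1 := by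
  ext i j
  have hfi := congrFun hf i
  have hgi := congrFun hg i
  simp only [mulVec, dotProduct, Fin.sum_univ_two] at hfi hgi
  fin_cases i <;> fin_cases j <;> norm_num at hfi hgi ⊢ <;> linarith

theorem stmt_6 (T : GL (Fin 2) ℝ)
    (h : glAct T (christoffel (-1) 0 1 0 0 2) = christoffel (-1) 0 1 0 0 2) :
    T = 1 := by
  obtain ⟨hf, hg⟩ := mulVec_model_idempotents_of_glAct_eq h
  exact Units.ext (eq_one_of_mulVec_model_idempotents hf hg)
end

section
/- Let c ∈ ℝ with c ∉ {0, −1, −1/2}, and let Γ be the Christoffel symbols of the model ℳ₂¹(c) = ℳ(−1,0,c,0,0,1+2c), i.e., Γ₁₁¹ = −1, Γ₁₂¹ = Γ₂₁¹ = c, Γ₂₂² = 1+2c, and all other symbols zero. If T ∈ GL(2,ℝ) satisfies (T·Γ)ᵢⱼᵏ = Γᵢⱼᵏ for all i,j,k, then T is the identity matrix. -/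
/-!
With `N = T⁻¹`, invariance of `Γ` says `Γ(N u, N v) = N Γ(u, v)`. Evaluated on the basis
vectors this is a system of quadratic equations in the entries of `N = !![p, q; r, s]`: the
`(2,2,2)` component gives `s² = s`, and if `r ≠ 0` the `(1,2,2)` component cancels to
`(1 + 2c) s = c`, forcing `c ∈ {0, -1}`. So `r = 0`, invertibility gives `s = 1` and `p ≠ 0`,
and then the `(1,1,1)` and `(1,2,1)` components give `p = 1` and `q = 0`.
-/

open Matrix

def evalColumns (N : Matrix (Fin 2) (Fin 2) ℝ) (Γ : Fin 2 → Fin 2 → Fin 2 → ℝ) :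
    Fin 2 → Fin 2 → Fin 2 → ℝ := fun i j l =>
  ∑ m : Fin 2, ∑ n : Fin 2, Γ m n l * N m i * N n j

lemma glAct_apply (T : GL (Fin 2) ℝ) (Γ : Fin 2 → Fin 2 → Fin 2 → ℝ) (i j : Fin 2) :
    glAct T Γ i j = (T : Matrix (Fin 2) (Fin 2) ℝ) *ᵥ evalColumns ↑T⁻¹ Γ i j := by
  ext k
  simp only [glAct, evalColumns, mulVec, dotProduct, Finset.mul_sum, mul_assoc]

lemma glAct_eq_self_iff (T : GL (Fin 2) ℝ) (Γ : Fin 2 → Fin 2 → Fin 2 → ℝ) :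
    glAct T Γ = Γ ↔
      ∀ i j, evalColumns ↑T⁻¹ Γ i j = (↑T⁻¹ : Matrix (Fin 2) (Fin 2) ℝ) *ᵥ Γ i j := by
  constructor
  · intro h i j
    rw [← congrFun (congrFun h i) j, glAct_apply, mulVec_mulVec, Units.inv_mul, one_mulVec]
  · intro h
    ext i j : 2
    rw [glAct_apply, h, mulVec_mulVec, Units.mul_inv, one_mulVec]

lemma entries_eq_of_isotropy_equations {c p q r s : ℝ} (hc : c ∉ ({0, -1, -1/2} : Set ℝ))
    (hdet : p * s - q * r ≠ 0) (h₁ : -p ^ 2 + 2 * c * p * r = -p)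
    (h₂ : -p * q + c * (p * s + r * q) = c * p) (h₃ : (1 + 2 * c) * r * s = c * r)
    (h₄ : (1 + 2 * c) * s ^ 2 = (1 + 2 * c) * s) :
    p = 1 ∧ q = 0 ∧ r = 0 ∧ s = 1 := by
  simp only [Set.mem_insert_iff, Set.mem_singleton_iff, not_or] at hc
  obtain ⟨hc₀, hc₁, hc₂⟩ := hc
  have h2c : 1 + 2 * c ≠ 0 := fun h => hc₂ (by linarith)
  have hs : s = 0 ∨ s = 1 := by
    have : s * (s - 1) = 0 := (mul_right_inj' h2c).mp (by linear_combination h₄)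
    rcases mul_eq_zero.mp this with h | h
    · exact .inl h
    · exact .inr (by linarith)
  have hr : r = 0 := by
    by_contra hr
    have hsc : (1 + 2 * c) * s = c := mul_right_cancel₀ hr (by linear_combination h₃)
    rcases hs with rfl | rfl
    · exact hc₀ (by linarith)
    · exact hc₁ (by linarith)
  subst hr
  have hs : s = 1 := hs.resolve_left fun h => hdet (by simp [h])
  subst hs
  have hp : p = 1 := by
    have hp₀ : p ≠ 0 := fun h => hdet (by simp [h])
    exact mul_left_cancel₀ hp₀ (by linear_combination -h₁)
  subst hp
  exact ⟨rfl, by linarith, rfl, rfl⟩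

lemma eq_one_of_evalColumns_eq_mulVec {c : ℝ} (hc : c ∉ ({0, -1, -1/2} : Set ℝ))
    {N : Matrix (Fin 2) (Fin 2) ℝ} (hN : N.det ≠ 0)
    (hE : ∀ i j, evalColumns N (christoffel (-1) 0 c 0 0 (1 + 2 * c)) i j =
      N *ᵥ christoffel (-1) 0 c 0 0 (1 + 2 * c) i j) :
    N = 1 := by
  have e₁ := congrFun (hE 0 0) 0
  have e₂ := congrFun (hE 0 1) 0
  have e₃ := congrFun (hE 0 1) 1
  have e₄ := congrFun (hE 1 1) 1
  simp only [evalColumns, christoffel, mulVec, dotProduct, Fin.sum_univ_two, cons_val_zero,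
    cons_val_one, cons_val_fin_one] at e₁ e₂ e₃ e₄
  rw [det_fin_two] at hN
  obtain ⟨h₀₀, h₀₁, h₁₀, h₁₁⟩ := entries_eq_of_isotropy_equations hc hN
    (by linear_combination e₁) (by linear_combination e₂) (by linear_combination e₃)
    (by linear_combination e₄)
  ext i j
  fin_cases i <;> fin_cases j <;> simp [h₀₀, h₀₁, h₁₀, h₁₁]

theorem stmt_7 (c : ℝ) (hc : c ∉ ({0, -1, -1/2} : Set ℝ)) (T : GL (Fin 2) ℝ)
    (h : glAct T (christoffel (-1) 0 c 0 0 (1 + 2*c)) =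
      christoffel (-1) 0 c 0 0 (1 + 2*c)) :
    T = 1 := by
  have hdet : (↑T⁻¹ : Matrix (Fin 2) (Fin 2) ℝ).det ≠ 0 :=
    ((T⁻¹).isUnit.map detMonoidHom).ne_zero
  have hTinv : T⁻¹ = 1 :=
    Units.ext (eq_one_of_evalColumns_eq_mulVec hc hdet ((glAct_eq_self_iff T _).mp h))
  exact inv_eq_one.mp hTinv
end

section
/- Let c ∈ ℝ and let Γ be the Christoffel symbols of the model ℳ₄¹(c) = ℳ(0,0,1,0,c,2), i.e., Γ₁₂¹ = Γ₂₁¹ = 1, Γ₂₂¹ = c, Γ₂₂² = 2, and all other symbols zero. If c ≠ 0, then a matrix T ∈ GL(2,ℝ) satisfies (T·Γ)ᵢⱼᵏ = Γᵢⱼᵏ for all i,j,k if and only if T is the matrix of a map T(x¹,x²) = (x¹ − w x², x²) for some w ∈ ℝ. If c = 0, then T·Γ = Γ if and only if T is the matrix of a map T(x¹,x²) = (λ(x¹ − w x²), x²) for some λ ≠ 0 and w ∈ ℝ. -/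
open Matrix

/-!
Instead of `T·Γ = Γ` one solves the equivalent equation `T Γ(x, y) = Γ(Tx, Ty)`, which is free of
`T⁻¹`. For `T = !![p, q; r, s]` and the model `ℳ₄¹(c)`, the second component of
`Γ(Te₁, Te₁) = 0` is `2r² = 0`, so `r = 0`; then the first component of `Γ(Te₁, Te₂) = T e₁` reads
`ps = p`, so `s = 1`; finally `Γ(Te₂, Te₂) = T(c, 2)` reduces to `cp = c`.
-/

section Pullback

variable {ι R : Type*} [Fintype ι] [CommSemiring R]

def pushforward (A : Matrix ι ι R) (Γ : ι → ι → ι → R) : ι → ι → ι → R :=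
  fun a b => A *ᵥ Γ a b

/-- `pullback A Γ` is `(x, y) ↦ Γ (A x) (A y)`, computed componentwise on the Gram matrices of
the bilinear forms `Γ^k`. -/
def pullback (A : Matrix ι ι R) (Γ : ι → ι → ι → R) : ι → ι → ι → R :=
  fun a b k => (Aᵀ * Matrix.of (fun i j => Γ i j k) * A) a b

theorem pullback_one [DecidableEq ι] (Γ : ι → ι → ι → R) : pullback 1 Γ = Γ := by
  ext a b k
  simp [pullback]

theorem pullback_pullback (A B : Matrix ι ι R) (Γ : ι → ι → ι → R) :
    pullback B (pullback A Γ) = pullback (A * B) Γ := by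
  ext a b k
  change (Bᵀ * (Aᵀ * Matrix.of (fun i j => Γ i j k) * A) * B) a b = _
  simp only [pullback, Matrix.transpose_mul, Matrix.mul_assoc]

end Pullback

theorem glAct_eq_pullback_pushforward (T : GL (Fin 2) ℝ) (Γ : Fin 2 → Fin 2 → Fin 2 → ℝ) :
    glAct T Γ = pullback (T⁻¹ : GL (Fin 2) ℝ) (pushforward T Γ) := by
  ext i j k
  simp only [glAct, pullback, pushforward, Matrix.mulVec, dotProduct, Matrix.mul_apply,
    Matrix.transpose_apply, Matrix.of_apply, Fin.sum_univ_two]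
  ring

theorem glAct_eq_iff (T : GL (Fin 2) ℝ) (Γ Γ' : Fin 2 → Fin 2 → Fin 2 → ℝ) :
    glAct T Γ = Γ' ↔ pushforward T Γ = pullback T Γ' := by
  rw [glAct_eq_pullback_pushforward]
  constructor
  · rintro rfl
    rw [pullback_pullback, Units.inv_mul, pullback_one]
  · intro h
    rw [h, pullback_pullback, Units.mul_inv, pullback_one]

theorem pushforward_christoffel_eq_pullback_iff (c p q r s : ℝ) (hdet : p * s - q * r ≠ 0) :
    pushforward !![p, q; r, s] (christoffel 0 0 1 0 c 2) =
        pullback !![p, q; r, s] (christoffel 0 0 1 0 c 2) ↔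
      r = 0 ∧ s = 1 ∧ c * p = c := by
  simp only [funext_iff, Fin.forall_fin_two, pushforward, pullback, christoffel, Matrix.mulVec,
    dotProduct, Matrix.mul_apply, Fin.sum_univ_two, Fin.isValue, Matrix.of_apply,
    Matrix.cons_val', Matrix.cons_val_zero, Matrix.cons_val_fin_one, Matrix.cons_val_one,
    Matrix.transpose_apply, mul_zero, mul_one, add_zero, zero_add, zero_mul, zero_eq_mul,
    mul_eq_zero, OfNat.ofNat_ne_zero, or_false, or_self]
  constructor
  · rintro ⟨⟨⟨-, rfl⟩, h_e₁e₂, -⟩, -, h_e₂e₂, -⟩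
    have hps : p * s ≠ 0 := by simpa using hdet
    have hs : s = 1 := by
      apply mul_left_cancel₀ (left_ne_zero_of_mul hps)
      linear_combination h_e₁e₂.symm
    subst hs
    exact ⟨rfl, rfl, by linear_combination h_e₂e₂⟩
  · rintro ⟨rfl, rfl, hcp⟩
    refine ⟨⟨⟨by ring, rfl⟩, by ring, by ring⟩, ⟨by ring, by ring⟩, by linear_combination hcp, by ring⟩
theorem stmt_10 (c : ℝ) (T : GL (Fin 2) ℝ) :
    (c ≠ 0 →
      (glAct T (christoffel 0 0 1 0 c 2) = christoffel 0 0 1 0 c 2 ↔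
        ∃ w : ℝ, (T : Matrix (Fin 2) (Fin 2) ℝ) = !![1, -w; 0, 1])) ∧
    (c = 0 →
      (glAct T (christoffel 0 0 1 0 c 2) = christoffel 0 0 1 0 c 2 ↔
        ∃ l w : ℝ, l ≠ 0 ∧
          (T : Matrix (Fin 2) (Fin 2) ℝ) = !![l, -(l*w); 0, 1])) := by
  obtain ⟨p, q, r, s, hT⟩ : ∃ p q r s, (T : Matrix (Fin 2) (Fin 2) ℝ) = !![p, q; r, s] :=
    ⟨_, _, _, _, Matrix.eta_fin_two _⟩
  have hdet : p * s - q * r ≠ 0 := by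
    simpa [hT, Matrix.det_fin_two_of] using (Matrix.isUnit_iff_isUnit_det _).mp T.isUnit
  rw [glAct_eq_iff, hT, pushforward_christoffel_eq_pullback_iff c p q r s hdet]
  refine ⟨fun hc => ⟨?_, ?_⟩, fun hc => ⟨?_, ?_⟩⟩
  · rintro ⟨rfl, rfl, hcp⟩
    obtain rfl : p = 1 := by simpa [hc] using hcp
    exact ⟨-q, by simp⟩
  · rintro ⟨w, hw⟩
    obtain ⟨⟨rfl, -⟩, rfl, rfl⟩ : (p = 1 ∧ q = -w) ∧ r = 0 ∧ s = 1 := by simpa using hw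
    simp
  · rintro ⟨rfl, rfl, -⟩
    have hp : p ≠ 0 := by simpa using hdet
    exact ⟨p, -q / p, hp, by field_simp⟩
  · rintro ⟨l, w, -, hw⟩
    obtain ⟨-, rfl, rfl⟩ : (p = l ∧ q = -(l * w)) ∧ r = 0 ∧ s = 1 := by simpa using hw
    simp [hc]
end

section
/- Let c ∈ ℝ and let Γ be the Christoffel symbols of the model ℳ₅¹(c) = ℳ(1,0,0,0,1+c²,2c), i.e., Γ₁₁¹ = 1, Γ₂₂¹ = 1+c², Γ₂₂² = 2c, and all other symbols zero. If c ≠ 0, then the only matrix T ∈ GL(2,ℝ) satisfying (T·Γ)ᵢⱼᵏ = Γᵢⱼᵏ for all i,j,k is the identity. If c = 0, then T·Γ = Γ if and only if T is the identity or T = diag(1, −1). -/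
/-! Writing `Γ` for the bilinear map `ℝ² × ℝ² → ℝ²` with components `Γ_{ij}{}^k`, the action is
`(T·Γ)(x, y) = T Γ(T⁻¹x, T⁻¹y)`, so `T` fixes `Γ` iff `T Γ(x, y) = Γ(Tx, Ty)`: a system of
polynomial equations in the entries of `T`, with no inverse left. For
`Γ(x, y) = (x₁y₁ + (1 + c²)x₂y₂, 2c x₂y₂)` the equations at `(e₁, e₁)` and `(e₁, e₂)` together
with `det T ≠ 0` force the first column and row of `T` to be those of the identity; the equation at
`(e₂, e₂)` then gives `T₂₂² = 1` and `c T₂₂ (T₂₂ - 1) = 0`. -/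

open Matrix

section TensorChange

variable {ι R : Type*} [Fintype ι] [CommSemiring R]

/-- `Γ(A·, A·)`, viewing `Γ` as the bilinear map with components `Γ_{ij}{}^k`. -/
def precompose (A : Matrix ι ι R) (Γ : ι → ι → ι → R) : ι → ι → ι → R :=
  fun i j k => (Aᵀ * of (fun m n => Γ m n k) * A) i j

/-- `A Γ(·, ·)`, viewing `Γ` as the bilinear map with components `Γ_{ij}{}^k`. -/
def postcompose (A : Matrix ι ι R) (Γ : ι → ι → ι → R) : ι → ι → ι → R :=
  fun i j k => ∑ l, A k l * Γ i j l

theorem of_precompose (A : Matrix ι ι R) (Γ : ι → ι → ι → R) (k : ι) :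
    of (fun m n => precompose A Γ m n k) = Aᵀ * of (fun m n => Γ m n k) * A :=
  rfl

theorem of_postcompose (A : Matrix ι ι R) (Γ : ι → ι → ι → R) (k : ι) :
    of (fun m n => postcompose A Γ m n k) = ∑ l, A k l • of (fun m n => Γ m n l) := by
  ext m n
  simp [postcompose, Matrix.sum_apply]

theorem precompose_precompose (A B : Matrix ι ι R) (Γ : ι → ι → ι → R) :
    precompose A (precompose B Γ) = precompose (B * A) Γ := by
  funext i j k
  rw [precompose, of_precompose, precompose, transpose_mul]
  simp only [Matrix.mul_assoc]

theorem precompose_one [DecidableEq ι] (Γ : ι → ι → ι → R) : precompose 1 Γ = Γ := by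
  funext i j k
  simp [precompose]

theorem precompose_postcompose (A B : Matrix ι ι R) (Γ : ι → ι → ι → R) :
    precompose A (postcompose B Γ) = postcompose B (precompose A Γ) := by
  funext i j k
  rw [precompose, of_postcompose, Matrix.mul_sum, Matrix.sum_mul, Matrix.sum_apply]
  simp only [Matrix.mul_smul, Matrix.smul_mul, Matrix.smul_apply, smul_eq_mul, postcompose,
    precompose]

end TensorChange

theorem glAct_eq_postcompose_precompose (T : GL (Fin 2) ℝ) (Γ : Fin 2 → Fin 2 → Fin 2 → ℝ) :
    glAct T Γ = postcompose (T : Matrix (Fin 2) (Fin 2) ℝ) (precompose (T⁻¹ : GL (Fin 2) ℝ) Γ) := by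
  funext i j k
  simp only [glAct, precompose, postcompose, mul_apply, transpose_apply, of_apply,
    Finset.mul_sum, Finset.sum_mul]
  refine Finset.sum_congr rfl fun l _ => Finset.sum_comm.trans ?_
  exact Finset.sum_congr rfl fun _ _ => Finset.sum_congr rfl fun _ _ => by ring

theorem glAct_eq_self_iff_s11 (T : GL (Fin 2) ℝ) (Γ : Fin 2 → Fin 2 → Fin 2 → ℝ) :
    glAct T Γ = Γ ↔ postcompose (T : Matrix (Fin 2) (Fin 2) ℝ) Γ = precompose T Γ := by
  have precompose_inv_mul (U : GL (Fin 2) ℝ) (Δ : Fin 2 → Fin 2 → Fin 2 → ℝ) :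
      precompose (U : Matrix (Fin 2) (Fin 2) ℝ) (precompose (U⁻¹ : GL (Fin 2) ℝ) Δ) = Δ := by
    rw [precompose_precompose, ← Units.val_mul, inv_mul_cancel, Units.val_one, precompose_one]
  have hinj : Function.Injective (precompose (T : Matrix (Fin 2) (Fin 2) ℝ)) :=
    Function.LeftInverse.injective (g := precompose (T⁻¹ : GL (Fin 2) ℝ)) fun Δ => by
      simpa using precompose_inv_mul T⁻¹ Δ
  rw [← hinj.eq_iff, glAct_eq_postcompose_precompose, precompose_postcompose, precompose_inv_mul]

theorem postcompose_eq_precompose_christoffel_iff (c : ℝ) {A : Matrix (Fin 2) (Fin 2) ℝ}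
    (hA : A.det ≠ 0) :
    postcompose A (christoffel 1 0 0 0 (1 + c^2) (2*c)) =
        precompose A (christoffel 1 0 0 0 (1 + c^2) (2*c)) ↔
      A = 1 ∨ (c = 0 ∧ A = !![1, 0; 0, -1]) := by
  obtain ⟨a, b, e, f, rfl⟩ : ∃ a b e f, A = !![a, b; e, f] := ⟨_, _, _, _, eta_fin_two A⟩
  rw [det_fin_two_of] at hA
  simp only [funext_iff, Fin.forall_fin_two, postcompose, precompose, christoffel,
    Fin.sum_univ_two, mul_apply, of_apply, transpose_apply, one_fin_two]
  simp
  constructor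
  · rintro ⟨⟨⟨h₁, h₂⟩, h₃, h₄⟩, -, h₅, h₆⟩
    have he : e = 0 := by
      -- otherwise `2ce = 1`, so `f = 0`, hence `b ≠ 0` and `a = 0`, contradicting `h₁`
      by_contra he
      have hce : 2 * c * e = 1 := by
        have : e * (2 * c * e - 1) = 0 := by linear_combination -h₂
        linarith [(mul_eq_zero.mp this).resolve_left he]
      have hc : c ≠ 0 := by rintro rfl; simp at hce
      have hf : f = 0 := by simpa [he, hc] using h₄
      have ha : a = 0 := by
        have hb : b ≠ 0 := by rintro rfl; simp [hf] at hA
        simpa [hf, hb] using h₃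
      have : 0 < e * e * (1 + c ^ 2) := mul_pos (mul_self_pos.mpr he) (by positivity)
      nlinarith
    subst he
    have ha : a = 1 := by
      have : a * (a - 1) = 0 := by linear_combination -h₁
      have ha0 : a ≠ 0 := by rintro rfl; simp at hA
      linarith [(mul_eq_zero.mp this).resolve_left ha0]
    subst ha
    have hb : b = 0 := by simpa using h₃.symm
    subst hb
    have hf : f * f = 1 := by
      have : (1 + c ^ 2) * (f * f - 1) = 0 := by linear_combination -h₅
      linarith [(mul_eq_zero.mp this).resolve_left (by positivity)]
    rcases mul_self_eq_one_iff.mp hf with rfl | rfl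
    · simp
    · exact .inr ⟨by linarith, by norm_num⟩
  · rintro (⟨⟨rfl, rfl⟩, rfl, rfl⟩ | ⟨rfl, ⟨rfl, rfl⟩, rfl, rfl⟩) <;> norm_num

theorem stmt_11 (c : ℝ) (T : GL (Fin 2) ℝ) :
    (c ≠ 0 →
      (glAct T (christoffel 1 0 0 0 (1 + c^2) (2*c)) =
          christoffel 1 0 0 0 (1 + c^2) (2*c) → T = 1)) ∧
    (c = 0 →
      (glAct T (christoffel 1 0 0 0 (1 + c^2) (2*c)) =
          christoffel 1 0 0 0 (1 + c^2) (2*c) ↔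
        (T : Matrix (Fin 2) (Fin 2) ℝ) = 1 ∨
        (T : Matrix (Fin 2) (Fin 2) ℝ) = !![1, 0; 0, -1])) := by
  have key := (glAct_eq_self_iff_s11 T _).trans
    (postcompose_eq_precompose_christoffel_iff c T.det_ne_zero)
  refine ⟨fun hc h => ?_, ?_⟩
  · rcases key.mp h with hT | ⟨hc0, -⟩
    · exact Units.ext hT
    · exact absurd hc0 hc
  · rintro rfl
    simpa using key
end

section
/- For c ∈ ℝ, let ℳ₅¹(c) denote the Christoffel tuple (1,0,0,0,1+c²,2c), i.e., Γ₁₁¹ = 1, Γ₂₂¹ = 1+c², Γ₂₂² = 2c, all other symbols zero. Suppose T ∈ GL(2,ℝ) has det T > 0 and (T·Γ(c))ᵢⱼᵏ = Γ(c')ᵢⱼᵏ for all i,j,k, where Γ(c), Γ(c') are the Christoffel symbols of ℳ₅¹(c), ℳ₅¹(c'). Then T is the identity matrix and c = c'. Consequently the subgroup GL₊(2,ℝ) of matrices with positive determinant acts without fixed points on the orbit set GL₊(2,ℝ)·{ℳ₅¹(c) : c ∈ ℝ}, and c ↦ ℳ₅¹(c) is a section of this action. -/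
open Matrix

/-!
Apply `S = T⁻¹` to both sides: the hypothesis becomes the quadratic system
`Γ(S eᵢ, S eⱼ) = S Γ'(eᵢ, eⱼ)` with `Γ(u, v) = (u₁v₁ + (1 + c²)u₂v₂, 2c u₂v₂)`.
If `S₂₁ ≠ 0`, the `e₁e₁` equation gives `2c S₂₁ = 1`, the `e₁e₂` equation then kills `S₂₂`, and the
`e₂e₂` equation kills `S₂₁`. Once `S₂₁ = 0` the system reads `S₁₁ = 1`, `S₁₂ = 0`, `c S₂₂ = c'` and
`S₂₂² = 1`; the reflection `S₂₂ = -1`, which realises `c' = -c`, is excluded by `det T > 0`.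
-/

/-- The model `ℳ₅¹(c)`. -/
def modelFiveOne (c : ℝ) : Fin 2 → Fin 2 → Fin 2 → ℝ :=
  christoffel 1 0 0 0 (1 + c ^ 2) (2 * c)

theorem inv_mulVec_glAct (T : GL (Fin 2) ℝ) (Γ : Fin 2 → Fin 2 → Fin 2 → ℝ) (i j : Fin 2) :
    ((T⁻¹ : GL (Fin 2) ℝ) : Matrix (Fin 2) (Fin 2) ℝ) *ᵥ glAct T Γ i j =
      fun l => ∑ m, ∑ n, Γ m n l * ((T⁻¹ : GL (Fin 2) ℝ) : Matrix (Fin 2) (Fin 2) ℝ) m i *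
        ((T⁻¹ : GL (Fin 2) ℝ) : Matrix (Fin 2) (Fin 2) ℝ) n j := by
  set S : Matrix (Fin 2) (Fin 2) ℝ := ((T⁻¹ : GL (Fin 2) ℝ) : Matrix (Fin 2) (Fin 2) ℝ)
  have hglAct : glAct T Γ i j = (T : Matrix (Fin 2) (Fin 2) ℝ) *ᵥ
      fun l => ∑ m, ∑ n, Γ m n l * S m i * S n j := by
    ext k
    simp only [glAct, mulVec, dotProduct, Finset.mul_sum, mul_assoc, S]
  rw [hglAct, mulVec_mulVec, ← Units.val_mul, inv_mul_cancel, Units.val_one, one_mulVec]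

theorem modelFiveOne_system_solution {c c' p q r s : ℝ} (hdet : 0 < p * s - q * r)
    (h₁ : p ^ 2 + (1 + c ^ 2) * r ^ 2 = p)
    (h₂ : 2 * c * r ^ 2 = r)
    (h₃ : p * q + (1 + c ^ 2) * (r * s) = 0)
    (h₄ : 2 * c * (r * s) = 0)
    (h₅ : q ^ 2 + (1 + c ^ 2) * s ^ 2 = p * (1 + c' ^ 2) + 2 * c' * q)
    (h₆ : 2 * c * s ^ 2 = r * (1 + c' ^ 2) + 2 * c' * s) :
    p = 1 ∧ q = 0 ∧ r = 0 ∧ s = 1 ∧ c = c' := by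
  have hr : r = 0 := by
    by_contra hr
    have hcr : 2 * c * r = 1 := mul_right_cancel₀ hr (by linear_combination h₂)
    have hs : s = 0 := by linear_combination h₄ - s * hcr
    have : r * (1 + c' ^ 2) = 0 := by linear_combination -h₆ + (2 * c * s - 2 * c') * hs
    exact hr ((mul_eq_zero.mp this).resolve_right (by positivity))
  subst hr
  have hp : p ≠ 0 := by rintro rfl; simp at hdet
  have hp1 : p = 1 := mul_left_cancel₀ hp (by linear_combination h₁)
  subst hp1
  have hq : q = 0 := by linear_combination h₃
  subst hq
  have hs : 0 < s := by simpa using hdet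
  have hcs : c * s = c' :=
    mul_left_cancel₀ (mul_ne_zero two_ne_zero hs.ne') (by linear_combination h₆)
  subst hcs
  have hs1 : s = 1 := by
    have : (s - 1) * (s + 1) = 0 := by linear_combination h₅
    rcases mul_eq_zero.mp this with h | h <;> linarith
  subst hs1
  simp

theorem eq_one_of_mulVec_modelFiveOne {c c' : ℝ} {S : Matrix (Fin 2) (Fin 2) ℝ} (hS : 0 < S.det)
    (h : ∀ i j, S *ᵥ modelFiveOne c' i j =
      fun l => ∑ m, ∑ n, modelFiveOne c m n l * S m i * S n j) :
    S = 1 ∧ c = c' := by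
  have e₁ := congrFun (h 0 0) 0
  have e₂ := congrFun (h 0 0) 1
  have e₃ := congrFun (h 0 1) 0
  have e₄ := congrFun (h 0 1) 1
  have e₅ := congrFun (h 1 1) 0
  have e₆ := congrFun (h 1 1) 1
  simp only [modelFiveOne, christoffel, mulVec, dotProduct, Fin.sum_univ_two, Fin.isValue,
    cons_val_zero, cons_val_one] at e₁ e₂ e₃ e₄ e₅ e₆
  rw [det_fin_two] at hS
  obtain ⟨hp, hq, hr, hs, hc⟩ := modelFiveOne_system_solution (c := c) (c' := c') hS
    (by linear_combination -e₁) (by linear_combination -e₂) (by linear_combination -e₃)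
    (by linear_combination -e₄) (by linear_combination -e₅) (by linear_combination -e₆)
  refine ⟨?_, hc⟩
  rw [eta_fin_two S, one_fin_two, hp, hq, hr, hs]

theorem stmt_12 (c c' : ℝ) (T : GL (Fin 2) ℝ)
    (hdet : 0 < (T : Matrix (Fin 2) (Fin 2) ℝ).det)
    (h : glAct T (christoffel 1 0 0 0 (1 + c^2) (2*c)) =
      christoffel 1 0 0 0 (1 + c'^2) (2*c')) :
    T = 1 ∧ c = c' := by
  have hS : 0 < ((T⁻¹ : GL (Fin 2) ℝ) : Matrix (Fin 2) (Fin 2) ℝ).det := by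
    rw [coe_units_inv, det_nonsing_inv, Ring.inverse_eq_inv']
    exact inv_pos.mpr hdet
  obtain ⟨hS1, hc⟩ := eq_one_of_mulVec_modelFiveOne hS fun i j => h ▸ inv_mulVec_glAct T _ i j
  exact ⟨inv_eq_one.mp (Units.ext hS1), hc⟩
end

section
/- Define U₁(r,s) = (1+rs², −s(1+rs²), rs, −rs², r, −rs) and U₃(u,v) = (u,v,0,1+u,0,0), maps from ℝ² to ℝ⁶. Then Range(U₁) ∩ Range(U₃) = ∅, and for every w ∈ ℝ the point (0, 2w, 0, 1, 0, 0) lies in the closure of Range(U₁) in ℝ⁶ and lies in Range(U₃). -/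
open Matrix

/-- `(x¹)²` times the Ricci tensor of the Type B model `𝒩(a,b,c,d,e,f)`. -/
def ρB : R6 → Matrix (Fin 2) (Fin 2) ℝ
  | (a, b, c, d, e, f) =>
    !![(a-d+1)*d + b*(f-c), c*d - b*e + f;
       c*(d-1) - b*e, -c^2 + f*c + (a-d-1)*e]

def U1 : ℝ × ℝ → R6 := fun p =>
  (1 + p.1*p.2^2, -p.2*(1 + p.1*p.2^2), p.1*p.2, -p.1*p.2^2, p.1, -p.1*p.2)

def U2 : ℝ × ℝ → R6 := fun p => (p.1, p.2, 0, 0, 0, 0)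

def U3 : ℝ × ℝ → R6 := fun p => (p.1, p.2, 0, 1 + p.1, 0, 0)

open Filter Topology

theorem disjoint_range_U1_range_U3 : Disjoint (Set.range U1) (Set.range U3) := by
  rw [Set.disjoint_left]
  rintro _ ⟨⟨r, s⟩, rfl⟩ ⟨⟨u, v⟩, h⟩
  simp only [U1, U3, Prod.mk.injEq] at h
  obtain ⟨ha, -, -, hd, he, -⟩ := h
  subst he
  linarith

-- With `s = 1/ε`, the choice `r s² = -(1 + v ε)` pins `b = v` and `d = 1 + v ε`; `ε → 0` then reaches `(0, v, 0, 1, 0, 0)`.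
theorem U1_eq_polynomial_curve (v : ℝ) {ε : ℝ} (hε : ε ≠ 0) :
    U1 (-(1 + v*ε)*ε^2, ε⁻¹) =
      (-v*ε, v, -(1 + v*ε)*ε, 1 + v*ε, -(1 + v*ε)*ε^2, (1 + v*ε)*ε) := by
  simp only [U1, Prod.mk.injEq]
  refine ⟨?_, ?_, ?_, ?_, trivial, ?_⟩ <;> field_simp <;> ring

theorem mem_closure_range_U1 (v : ℝ) : ((0, v, 0, 1, 0, 0) : R6) ∈ closure (Set.range U1) := by
  set γ : ℝ → R6 := fun ε => (-v*ε, v, -(1 + v*ε)*ε, 1 + v*ε, -(1 + v*ε)*ε^2, (1 + v*ε)*ε)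
  have hγ : Tendsto γ (𝓝[≠] 0) (𝓝 (0, v, 0, 1, 0, 0)) := by
    have hγ0 : γ 0 = (0, v, 0, 1, 0, 0) := by simp [γ]
    rw [← hγ0]
    exact ((by fun_prop : Continuous γ).tendsto 0).mono_left nhdsWithin_le_nhds
  have hU1 : (fun ε => U1 (-(1 + v*ε)*ε^2, ε⁻¹)) =ᶠ[𝓝[≠] 0] γ :=
    eventually_nhdsWithin_of_forall fun ε hε => U1_eq_polynomial_curve v hε
  exact mem_closure_of_tendsto (hγ.congr' hU1.symm)
    (Eventually.of_forall fun ε => Set.mem_range_self _)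

theorem stmt_16 :
    Set.range U1 ∩ Set.range U3 = ∅ ∧
    ∀ w : ℝ, ((0, 2*w, 0, 1, 0, 0) : R6) ∈ closure (Set.range U1) ∧
      ((0, 2*w, 0, 1, 0, 0) : R6) ∈ Set.range U3 := by
  refine ⟨Set.disjoint_iff_inter_eq_empty.mp disjoint_range_U1_range_U3, fun w => ?_⟩
  refine ⟨mem_closure_range_U1 (2*w), (0, 2*w), ?_⟩
  simp [U3]
end
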